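/- arXiv:1911.08424 — 2 statements merged into one kernel-verified Lean document; each statement's English description precedes it below -/
import Mathlib

section
/- Let P and R be positive integers and, for each p ∈ [P], let A^(p) ∈ ℝ^{I_p×R} be a matrix. Then the coherence of the Khatri–Rao product satisfies μ(⊙_{p=1}^P A^(p)) ≤ ∏_{p=1}^P μ(A^(p)). -/
open Matrix

/-- The `i`-th leverage score of a real matrix `A`: the squared norm of the orthogonal
projection of the `i`-th standard basis vector onto the column space of `A`. -/
noncomputable def levScore {m : Type*} [Fintype m] [DecidableEq m] {n : Type*} [Fintype n]
    (A : Matrix m n ℝ) (i : m) : ℝ :=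
  ‖(Submodule.orthogonalProjectionOnto
      (Submodule.span ℝ (Set.range fun j : n => (EuclideanSpace.equiv m ℝ).symm (fun k => A k j))))
      (EuclideanSpace.single i 1)‖ ^ 2

/-- The coherence of a real matrix: the maximum leverage score. -/
noncomputable def coherence {m : Type*} [Fintype m] [DecidableEq m] {n : Type*} [Fintype n]
    (A : Matrix m n ℝ) : ℝ :=
  ⨆ i, levScore A i

/-- The Khatri–Rao product of matrices `A p : ℝ^{I_p × R}`, `p ∈ [P]`: the matrix of size
`(I_1 ⋯ I_P) × R` whose entry indexed by `(i_1, …, i_P)` and `r` is `∏ p, (A p) (i p) r`. -/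
noncomputable def khatriRao {P R : ℕ} {Ip : Fin P → ℕ}
    (A : (p : Fin P) → Matrix (Fin (Ip p)) (Fin R) ℝ) :
    Matrix ((p : Fin P) → Fin (Ip p)) (Fin R) ℝ :=
  Matrix.of fun i r => ∏ p, A p (i p) r

/-!
The column space of the Khatri–Rao product lies in the tensor product `⨂ p, col(A⁽ᵖ⁾)` of
the column spaces of its factors, so the leverage score of row `i = (i_1, …, i_P)` is at most
the squared norm of the projection of `e_i = ⨂ p, e_{i_p}` onto that tensor product.
Orthogonal projection onto a tensor product of subspaces acts factorwise on elementary
tensors, and norms of elementary tensors multiply, so this squared norm is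
`∏ p, ℓ_{i_p}(A⁽ᵖ⁾)`.
-/

open scoped RealInnerProductSpace

theorem Submodule.norm_orthogonalProjectionOnto_le_of_le {E : Type*} [NormedAddCommGroup E]
    [InnerProductSpace ℝ E] {U V : Submodule ℝ E} [U.HasOrthogonalProjection]
    [V.HasOrthogonalProjection] (h : U ≤ V) (x : E) :
    ‖U.orthogonalProjectionOnto x‖ ≤ ‖V.starProjection x‖ := by
  rw [← orthogonalProjectionOnto_starProjection_of_le h]
  exact norm_orthogonalProjectionOnto_apply_le _ _

section EuclideanTprod

variable {ι : Type*} [Fintype ι] {κ : ι → Type*}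

noncomputable def euclideanTprod (u : ∀ i, EuclideanSpace ℝ (κ i)) :
    EuclideanSpace ℝ (∀ i, κ i) :=
  WithLp.toLp 2 fun j => ∏ i, u i (j i)

@[simp]
theorem euclideanTprod_apply (u : ∀ i, EuclideanSpace ℝ (κ i)) (j : ∀ i, κ i) :
    euclideanTprod u j = ∏ i, u i (j i) := rfl

theorem euclideanTprod_single [∀ i, DecidableEq (κ i)] (j : ∀ i, κ i) :
    euclideanTprod (fun i => EuclideanSpace.single (j i) (1 : ℝ)) =
      EuclideanSpace.single j 1 := by
  ext j'
  by_cases h : j' = j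
  · simp [h]
  · obtain ⟨i, hi⟩ := Function.ne_iff.mp h
    simp only [euclideanTprod_apply, PiLp.single_apply, if_neg h]
    exact Finset.prod_eq_zero (Finset.mem_univ i) (if_neg hi)

variable [DecidableEq ι] [∀ i, Fintype (κ i)]

theorem inner_euclideanTprod (u v : ∀ i, EuclideanSpace ℝ (κ i)) :
    ⟪euclideanTprod u, euclideanTprod v⟫ = ∏ i, ⟪u i, v i⟫ := by
  simp only [PiLp.inner_apply, RCLike.inner_apply, conj_trivial, euclideanTprod_apply,
    Fintype.prod_sum, Finset.prod_mul_distrib]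

theorem norm_sq_euclideanTprod (u : ∀ i, EuclideanSpace ℝ (κ i)) :
    ‖euclideanTprod u‖ ^ 2 = ∏ i, ‖u i‖ ^ 2 := by
  simp only [← real_inner_self_eq_norm_sq, inner_euclideanTprod]

/-- The tensor product `⨂ i, U i`, as a subspace of `ℝ^(∀ i, κ i)`. -/
noncomputable def tprodSpan (U : ∀ i, Submodule ℝ (EuclideanSpace ℝ (κ i))) :
    Submodule ℝ (EuclideanSpace ℝ (∀ i, κ i)) :=
  Submodule.span ℝ (euclideanTprod '' Set.univ.pi fun i => (U i : Set _))

theorem starProjection_tprodSpan_euclideanTprod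
    (U : ∀ i, Submodule ℝ (EuclideanSpace ℝ (κ i))) (x : ∀ i, EuclideanSpace ℝ (κ i)) :
    (tprodSpan U).starProjection (euclideanTprod x) =
      euclideanTprod fun i => (U i).starProjection (x i) := by
  refine Submodule.eq_starProjection_of_mem_orthogonal
    (Submodule.subset_span ⟨_, fun i _ => (U i).starProjection_apply_mem (x i), rfl⟩) ?_
  -- orthogonality to a span only needs to be checked on the spanning elementary tensors
  rw [← Submodule.span_singleton_le_iff_mem, ← Submodule.isOrtho_iff_le, Submodule.isOrtho_comm,
    Submodule.isOrtho_iff_le, tprodSpan, Submodule.span_le]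
  rintro _ ⟨v, hv, rfl⟩
  rw [SetLike.mem_coe, Submodule.mem_orthogonal_singleton_iff_inner_left, inner_sub_right,
    inner_euclideanTprod, inner_euclideanTprod, sub_eq_zero]
  refine Finset.prod_congr rfl fun i _ => ?_
  rw [← Submodule.inner_starProjection_left_eq_right,
    (U i).starProjection_eq_self_iff.mpr (hv i trivial)]

end EuclideanTprod

section LeverageScores

variable {m n : Type*} [Fintype m] [DecidableEq m] [Fintype n]

noncomputable def colSpace (A : Matrix m n ℝ) : Submodule ℝ (EuclideanSpace ℝ m) :=
  Submodule.span ℝ (Set.range fun j => (EuclideanSpace.equiv m ℝ).symm fun k => A k j)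

theorem levScore_eq_norm_sq (A : Matrix m n ℝ) (i : m) :
    levScore A i = ‖(colSpace A).orthogonalProjectionOnto (EuclideanSpace.single i 1)‖ ^ 2 :=
  rfl

theorem levScore_nonneg (A : Matrix m n ℝ) (i : m) : 0 ≤ levScore A i := sq_nonneg _

theorem levScore_le_coherence (A : Matrix m n ℝ) (i : m) : levScore A i ≤ coherence A :=
  le_ciSup (Set.finite_range _).bddAbove i

theorem coherence_nonneg (A : Matrix m n ℝ) : 0 ≤ coherence A :=
  Real.iSup_nonneg (levScore_nonneg A)

end LeverageScores

section KhatriRao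

variable {P R : ℕ} {Ip : Fin P → ℕ} (A : (p : Fin P) → Matrix (Fin (Ip p)) (Fin R) ℝ)

theorem colSpace_khatriRao_le :
    colSpace (khatriRao A) ≤ tprodSpan fun p => colSpace (A p) := by
  refine Submodule.span_le.mpr ?_
  rintro _ ⟨r, rfl⟩
  exact Submodule.subset_span ⟨fun _ => _, fun _ _ => Submodule.subset_span ⟨r, rfl⟩, rfl⟩

theorem levScore_khatriRao_le (i : (p : Fin P) → Fin (Ip p)) :
    levScore (khatriRao A) i ≤ ∏ p, levScore (A p) (i p) :=
  calc levScore (khatriRao A) i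
      ≤ ‖(tprodSpan fun p => colSpace (A p)).starProjection
          (EuclideanSpace.single i 1)‖ ^ 2 := by
        rw [levScore_eq_norm_sq]
        gcongr
        exact Submodule.norm_orthogonalProjectionOnto_le_of_le (colSpace_khatriRao_le A) _
    _ = ∏ p, levScore (A p) (i p) := by
        rw [← euclideanTprod_single, starProjection_tprodSpan_euclideanTprod,
          norm_sq_euclideanTprod]
        rfl

end KhatriRao

theorem coherence_khatriRao_le_general (P R : ℕ)
    (Ip : Fin P → ℕ)
    (A : (p : Fin P) → Matrix (Fin (Ip p)) (Fin R) ℝ) :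
    coherence (khatriRao A) ≤ ∏ p, coherence (A p) :=
  Real.iSup_le
    (fun i => (levScore_khatriRao_le A i).trans <| Finset.prod_le_prod
      (fun p _ => levScore_nonneg (A p) (i p)) fun p _ => levScore_le_coherence (A p) (i p))
    (Finset.prod_nonneg fun p _ => coherence_nonneg (A p))

/-- The coherence of a Khatri–Rao product is at most the product of the coherences. -/
theorem coherence_khatriRao_le (P R : ℕ) (hP : 0 < P) (hR : 0 < R)
    (Ip : Fin P → ℕ) (hIp : ∀ p, 0 < Ip p)
    (A : (p : Fin P) → Matrix (Fin (Ip p)) (Fin R) ℝ) :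
    coherence (khatriRao A) ≤ ∏ p, coherence (A p) :=
  coherence_khatriRao_le_general P R Ip A
end

section
/- Let P and R be positive integers, let η ∈ (0,1), and for each p ∈ [P] let X^(p) ∈ ℝ^{I_p×R} be a matrix and H^(p) ∈ ℝ^{I_p×I_p} an orthogonal matrix all of whose entries have absolute value 1/√I_p. For sign vectors d^(1) ∈ {−1,1}^{I_1},…,d^(P) ∈ {−1,1}^{I_P} let D^(p) = diag(d^(p)). Then, if the sign vectors d^(1),…,d^(P) are drawn independently and uniformly at random, with probability at least 1 − Pη the coherence of the Khatri–Rao product of the transformed factors satisfies μ(⊙_{p=1}^P H^(p) D^(p) X^(p)) ≤ (1/Ĩ) ∏_{p=1}^P 2R ln(2 I_p R / η), where Ĩ = I_1 I_2 ⋯ I_P. -/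
open Matrix

/-- The ±1 diagonal matrix associated with a Boolean sign vector. -/
noncomputable def signDiag {I : ℕ} (d : Fin I → Bool) : Matrix (Fin I) (Fin I) ℝ :=
  Matrix.diagonal fun i => if d i then (1 : ℝ) else -1

/-!
Write `D` for `signDiag d`. Each factor `X⁽ᵖ⁾` has an orthonormal basis `b₁, …, b_k` (`k ≤ R`) of
its column space; `H D` is orthogonal, so the vectors `H D bᵣ` form an orthonormal basis of the
column space of `H D X`. The Kronecker products of these bases are orthonormal and span a space
containing the columns of the Khatri–Rao product, so its leverage score at `(i₁, …, i_P)` is at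
most `∏ₚ ∑ᵣ (H⁽ᵖ⁾ D⁽ᵖ⁾ bᵣ)_{iₚ}²`. Each entry `(H D bᵣ)ᵢ = ∑ⱼ dⱼ Hᵢⱼ bᵣⱼ` is a Rademacher sum with
variance `1 / I`; Hoeffding's inequality (in counting form, from the moment generating function
and `cosh x ≤ exp (x² / 2)`) and a union bound over the `I k ≤ I R` entries show that all of
them satisfy `(H D bᵣ)ᵢ² ≤ 2 ln(2 I R / η) / I` for at least a `(1 - η)`-fraction of the signs.
The sign vectors of different factors are independent, and `(1 - η)^P ≥ 1 - P η`.
-/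

open WithLp Finset Real
open scoped RealInnerProductSpace

noncomputable abbrev colSpan {m n : Type*} [Fintype m] (A : Matrix m n ℝ) :
    Submodule ℝ (EuclideanSpace ℝ m) :=
  Submodule.span ℝ (Set.range fun j : n => (EuclideanSpace.equiv m ℝ).symm (fun k => A k j))

theorem norm_sq_orthogonalProjectionOnto_le_sum_sq_inner {E κ : Type*} [NormedAddCommGroup E]
    [InnerProductSpace ℝ E] [Fintype κ] {w : κ → E} (hw : Orthonormal ℝ w)
    {V : Submodule ℝ E} [V.HasOrthogonalProjection] (hV : V ≤ Submodule.span ℝ (Set.range w))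
    (x : E) :
    ‖V.orthogonalProjectionOnto x‖ ^ 2 ≤ ∑ s, ⟪w s, x⟫ ^ 2 := by
  obtain ⟨c, hc⟩ :=
    (Submodule.mem_span_range_iff_exists_fun ℝ).1 (hV (V.starProjection_apply_mem x))
  have hproj : ‖V.orthogonalProjectionOnto x‖ ^ 2 = ∑ s, c s * ⟪w s, x⟫ := by
    rw [← V.re_inner_starProjection_eq_normSq, ← hc, RCLike.re_to_real, sum_inner]
    simp only [real_inner_smul_left]
  have hc_sq : ∑ s, c s ^ 2 = ‖V.orthogonalProjectionOnto x‖ ^ 2 := by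
    rw [show ‖V.orthogonalProjectionOnto x‖ = ‖V.starProjection x‖ from rfl,
      ← real_inner_self_eq_norm_sq, ← hc, hw.inner_sum]
    simp only [sq, RCLike.conj_to_real]
  have hcs := sum_mul_sq_le_sq_mul_sq univ c fun s => ⟪w s, x⟫
  rw [← hproj, hc_sq] at hcs
  nlinarith [sq_nonneg ‖V.orthogonalProjectionOnto x‖,
    sum_nonneg fun s (_ : s ∈ univ) => sq_nonneg ⟪w s, x⟫]

theorem levScore_le_sum_sq_of_colSpan_le {m n κ : Type*} [Fintype m] [DecidableEq m] [Fintype n]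
    [Fintype κ] {A : Matrix m n ℝ} {w : κ → EuclideanSpace ℝ m} (hw : Orthonormal ℝ w)
    (hA : colSpan A ≤ Submodule.span ℝ (Set.range w)) (i : m) :
    levScore A i ≤ ∑ s, w s i ^ 2 := by
  have h := norm_sq_orthogonalProjectionOnto_le_sum_sq_inner hw hA (EuclideanSpace.single i 1)
  simp only [EuclideanSpace.inner_single_right, one_mul, RCLike.conj_to_real] at h
  exact h

section Kronecker

variable {P : Type*} [Fintype P] {ι κ : P → Type*}

noncomputable def kronVec (x : ∀ p, EuclideanSpace ℝ (ι p)) : EuclideanSpace ℝ (∀ p, ι p) :=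
  toLp 2 fun i => ∏ p, x p (i p)

@[simp]
theorem kronVec_apply (x : ∀ p, EuclideanSpace ℝ (ι p)) (i : ∀ p, ι p) :
    kronVec x i = ∏ p, x p (i p) := rfl

variable [DecidableEq P]

theorem kronVec_mem_span [∀ p, Fintype (κ p)] {v : ∀ p, κ p → EuclideanSpace ℝ (ι p)}
    {x : ∀ p, EuclideanSpace ℝ (ι p)} (hx : ∀ p, x p ∈ Submodule.span ℝ (Set.range (v p))) :
    kronVec x ∈ Submodule.span ℝ (Set.range fun s : ∀ p, κ p => kronVec fun p => v p (s p)) := by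
  choose c hc using fun p => (Submodule.mem_span_range_iff_exists_fun ℝ).1 (hx p)
  refine (Submodule.mem_span_range_iff_exists_fun ℝ).2 ⟨fun s => ∏ p, c p (s p), ?_⟩
  ext i
  simp only [← hc, kronVec_apply, ofLp_sum, Finset.sum_apply, PiLp.smul_apply, smul_eq_mul,
    Fintype.prod_sum, prod_mul_distrib]

variable [∀ p, Fintype (ι p)]

theorem inner_kronVec (x y : ∀ p, EuclideanSpace ℝ (ι p)) :
    ⟪kronVec x, kronVec y⟫ = ∏ p, ⟪x p, y p⟫ := by
  simp only [PiLp.inner_apply, RCLike.inner_apply, RCLike.conj_to_real, kronVec_apply,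
    Fintype.prod_sum, prod_mul_distrib]

theorem Orthonormal.kronVec {v : ∀ p, κ p → EuclideanSpace ℝ (ι p)}
    (hv : ∀ p, Orthonormal ℝ (v p)) :
    Orthonormal ℝ fun s : ∀ p, κ p => kronVec fun p => v p (s p) := by
  classical
  rw [orthonormal_iff_ite]
  intro s t
  simp only [inner_kronVec, fun p => orthonormal_iff_ite.1 (hv p)]
  split_ifs with hst
  · simp [hst]
  · obtain ⟨p, hp⟩ := Function.ne_iff.1 hst
    exact prod_eq_zero (mem_univ p) (if_neg hp)

end Kronecker

section KhatriRao

variable {P R : ℕ} {Ip : Fin P → ℕ} {κ : Fin P → Type*} [∀ p, Fintype (κ p)]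
  {A : (p : Fin P) → Matrix (Fin (Ip p)) (Fin R) ℝ}
  {v : ∀ p, κ p → EuclideanSpace ℝ (Fin (Ip p))}

theorem colSpan_khatriRao_le (hA : ∀ p, colSpan (A p) ≤ Submodule.span ℝ (Set.range (v p))) :
    colSpan (khatriRao A) ≤
      Submodule.span ℝ (Set.range fun s : ∀ p, κ p => kronVec fun p => v p (s p)) := by
  rw [Submodule.span_le]
  rintro _ ⟨j, rfl⟩
  exact kronVec_mem_span fun p => hA p (Submodule.subset_span ⟨j, rfl⟩)

theorem levScore_khatriRao_le_s4 (hv : ∀ p, Orthonormal ℝ (v p))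
    (hA : ∀ p, colSpan (A p) ≤ Submodule.span ℝ (Set.range (v p))) (i : ∀ p, Fin (Ip p)) :
    levScore (khatriRao A) i ≤ ∏ p, ∑ r, v p r (i p) ^ 2 := by
  refine (levScore_le_sum_sq_of_colSpan_le (Orthonormal.kronVec hv) (colSpan_khatriRao_le hA)
    i).trans_eq ?_
  simp only [kronVec_apply, Fintype.prod_sum, prod_pow]

theorem coherence_khatriRao_le_s4 (hIp : ∀ p, 0 < Ip p) (hv : ∀ p, Orthonormal ℝ (v p))
    (hA : ∀ p, colSpan (A p) ≤ Submodule.span ℝ (Set.range (v p))) {c : Fin P → ℝ}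
    (hc : ∀ p r i, v p r i ^ 2 ≤ c p) :
    coherence (khatriRao A) ≤ ∏ p, Fintype.card (κ p) * c p := by
  have : Nonempty (∀ p, Fin (Ip p)) := ⟨fun p => ⟨0, hIp p⟩⟩
  refine ciSup_le fun i => (levScore_khatriRao_le_s4 hv hA i).trans ?_
  gcongr with p
  simpa using sum_le_sum fun r (_ : r ∈ univ) => hc p r (i p)

end KhatriRao

def signOfBool (b : Bool) : ℝ := if b then 1 else -1

def rademacherSum {ι : Type*} [Fintype ι] (d : ι → Bool) (a : ι → ℝ) : ℝ :=
  ∑ j, signOfBool (d j) * a j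

section Rademacher

variable {ι : Type*} [Fintype ι]

theorem rademacherSum_neg (d : ι → Bool) (a : ι → ℝ) :
    rademacherSum d (-a) = -rademacherSum d a := by
  simp [rademacherSum]

variable [DecidableEq ι]

theorem sum_exp_rademacherSum (a : ι → ℝ) :
    ∑ d, exp (rademacherSum d a) = ∏ j, 2 * cosh (a j) := by
  simp only [rademacherSum, exp_sum]
  rw [← Fintype.prod_sum fun j b => exp (signOfBool b * a j)]
  refine prod_congr rfl fun j _ => ?_
  simp [signOfBool, cosh_eq, mul_div_cancel₀]

theorem sum_exp_rademacherSum_le (a : ι → ℝ) :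
    ∑ d, exp (rademacherSum d a) ≤ 2 ^ Fintype.card ι * exp ((∑ j, a j ^ 2) / 2) := by
  rw [sum_exp_rademacherSum, prod_mul_distrib, prod_const, card_univ, sum_div, exp_sum]
  gcongr with j
  exact cosh_le_exp_half_sq (a j)

theorem card_le_rademacherSum_le (a : ι → ℝ) {σ2 t : ℝ} (hσ2 : 0 < σ2)
    (ha : ∑ j, a j ^ 2 ≤ σ2) (ht : 0 ≤ t) :
    (#{d | t ≤ rademacherSum d a} : ℝ) ≤ exp (-t ^ 2 / (2 * σ2)) * 2 ^ Fintype.card ι := by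
  set s := fun d => rademacherSum d a
  -- the Chernoff parameter minimising `l ^ 2 * σ2 / 2 - l * t`
  set l := t / σ2
  have hl : 0 ≤ l := div_nonneg ht hσ2.le
  have markov : (#{d : ι → Bool | t ≤ s d} : ℝ) * exp (l * t) ≤ ∑ d, exp (l * s d) := by
    rw [← nsmul_eq_mul, ← sum_const]
    calc ∑ _d ∈ {d : ι → Bool | t ≤ s d}, exp (l * t)
        ≤ ∑ d ∈ {d : ι → Bool | t ≤ s d}, exp (l * s d) := by
          gcongr with d hd
          exact (mem_filter.1 hd).2
      _ ≤ ∑ d, exp (l * s d) :=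
          sum_le_sum_of_subset_of_nonneg (subset_univ _) fun _ _ _ => (exp_pos _).le
  have mgf : ∑ d, exp (l * s d) ≤ 2 ^ Fintype.card ι * exp (l ^ 2 * σ2 / 2) := by
    calc ∑ d, exp (l * s d) = ∑ d, exp (rademacherSum d fun j => l * a j) := by
          simp only [s, rademacherSum, mul_sum, mul_left_comm]
      _ ≤ 2 ^ Fintype.card ι * exp ((∑ j, (l * a j) ^ 2) / 2) := sum_exp_rademacherSum_le _
      _ ≤ 2 ^ Fintype.card ι * exp (l ^ 2 * σ2 / 2) := by
          simp only [mul_pow, ← mul_sum]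
          gcongr
  have key : l ^ 2 * σ2 / 2 - l * t = -t ^ 2 / (2 * σ2) := by
    simp only [l]
    field_simp
    ring
  rw [← key, exp_sub, mul_comm, ← mul_div_assoc, le_div_iff₀ (exp_pos _)]
  exact markov.trans mgf

theorem card_le_abs_rademacherSum_le (a : ι → ℝ) {σ2 t : ℝ} (hσ2 : 0 < σ2)
    (ha : ∑ j, a j ^ 2 ≤ σ2) (ht : 0 ≤ t) :
    (#{d | t ≤ |rademacherSum d a|} : ℝ) ≤ 2 * exp (-t ^ 2 / (2 * σ2)) * 2 ^ Fintype.card ι := by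
  have hsplit : ({d | t ≤ |rademacherSum d a|} : Finset (ι → Bool)) ⊆
      ({d | t ≤ rademacherSum d a} : Finset (ι → Bool)) ∪
        ({d | t ≤ rademacherSum d (-a)} : Finset (ι → Bool)) := by
    intro d
    simp only [mem_filter, mem_union, mem_univ, true_and, rademacherSum_neg]
    exact le_abs.1
  have hpos := card_le_rademacherSum_le a hσ2 ha ht
  have hneg := card_le_rademacherSum_le (-a) hσ2 (by simpa using ha) ht
  calc (#{d | t ≤ |rademacherSum d a|} : ℝ)
      ≤ #{d | t ≤ rademacherSum d a} + #{d | t ≤ rademacherSum d (-a)} := by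
        exact_mod_cast (card_le_card hsplit).trans (card_union_le _ _)
    _ ≤ _ := by linarith

theorem le_card_forall_abs_rademacherSum_lt {κ : Type*} [Fintype κ] (a : κ → ι → ℝ) {σ2 t : ℝ}
    (hσ2 : 0 < σ2) (ha : ∀ q, ∑ j, a q j ^ 2 ≤ σ2) (ht : 0 ≤ t) :
    (1 - Fintype.card κ * (2 * exp (-t ^ 2 / (2 * σ2)))) * 2 ^ Fintype.card ι ≤
      #{d | ∀ q, |rademacherSum d (a q)| < t} := by
  set good : Finset (ι → Bool) := {d | ∀ q, |rademacherSum d (a q)| < t}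
  have hbad : (#goodᶜ : ℝ) ≤
      Fintype.card κ * (2 * exp (-t ^ 2 / (2 * σ2))) * 2 ^ Fintype.card ι := by
    have hsub : goodᶜ ⊆ univ.biUnion fun q => {d | t ≤ |rademacherSum d (a q)|} := by
      intro d
      simp [good]
    calc (#goodᶜ : ℝ)
        ≤ ∑ q, (#{d | t ≤ |rademacherSum d (a q)|} : ℝ) := by
          exact_mod_cast (card_le_card hsub).trans card_biUnion_le
      _ ≤ ∑ _q : κ, 2 * exp (-t ^ 2 / (2 * σ2)) * 2 ^ Fintype.card ι :=
          sum_le_sum fun q _ => card_le_abs_rademacherSum_le (a q) hσ2 (ha q) ht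
      _ = _ := by simp [mul_assoc]
  have hcompl : (#goodᶜ : ℝ) + #good = 2 ^ Fintype.card ι := by
    exact_mod_cast (card_compl_add_card good).trans (by simp)
  nlinarith

end Rademacher

section Orthogonal

variable {m n : Type*} [Fintype m] [Fintype n] [DecidableEq n]

theorem colSpan_mul {l : Type*} (M : Matrix m n ℝ) (X : Matrix n l ℝ) :
    colSpan (M * X) = (colSpan X).map (toLpLin 2 2 M) := by
  rw [Submodule.map_span, ← Set.range_comp]
  rfl

theorem colSpan_mul_le_span {l κ : Type*} (M : Matrix m n ℝ) {X : Matrix n l ℝ}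
    {b : κ → EuclideanSpace ℝ n} (hX : colSpan X ≤ Submodule.span ℝ (Set.range b)) :
    colSpan (M * X) ≤ Submodule.span ℝ (Set.range (toLpLin 2 2 M ∘ b)) := by
  rw [colSpan_mul, Set.range_comp, ← Submodule.map_span]
  exact Submodule.map_mono hX

theorem inner_toLpLin_toLpLin {M : Matrix m n ℝ} (hM : Mᵀ * M = 1) (x y : EuclideanSpace ℝ n) :
    ⟪toLpLin 2 2 M x, toLpLin 2 2 M y⟫ = ⟪x, y⟫ := by
  simp only [EuclideanSpace.inner_eq_star_dotProduct, toLpLin_apply, star_trivial]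
  rw [dotProduct_mulVec, vecMul_mulVec, hM, vecMul_one]

theorem Orthonormal.comp_toLpLin {κ : Type*} {M : Matrix m n ℝ} (hM : Mᵀ * M = 1)
    {b : κ → EuclideanSpace ℝ n} (hb : Orthonormal ℝ b) :
    Orthonormal ℝ (toLpLin 2 2 M ∘ b) :=
  hb.comp_linearIsometry ((toLpLin 2 2 M).isometryOfInner (inner_toLpLin_toLpLin hM))

end Orthogonal

theorem Submodule.le_span_range_orthonormalBasis {E ι : Type*} [NormedAddCommGroup E]
    [InnerProductSpace ℝ E] [Fintype ι] {U : Submodule ℝ E} (b : OrthonormalBasis ι ℝ U) :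
    U ≤ Submodule.span ℝ (Set.range fun r => (b r : E)) := by
  intro x hx
  refine (Submodule.mem_span_range_iff_exists_fun ℝ).2 ⟨fun r => ⟪b r, ⟨x, hx⟩⟫, ?_⟩
  simpa using congrArg Subtype.val (b.sum_repr' ⟨x, hx⟩)

section SignDiag

variable {I : ℕ}

theorem signDiag_mul_self (d : Fin I → Bool) : signDiag d * signDiag d = 1 := by
  rw [signDiag, diagonal_mul_diagonal, ← diagonal_one]
  congr 1
  funext i
  cases d i <;> norm_num

theorem transpose_mul_self_of_mul_signDiag {H : Matrix (Fin I) (Fin I) ℝ} (hH : H * Hᵀ = 1)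
    (d : Fin I → Bool) : (H * signDiag d)ᵀ * (H * signDiag d) = 1 := by
  rw [transpose_mul, signDiag, diagonal_transpose, ← signDiag, Matrix.mul_assoc,
    ← Matrix.mul_assoc Hᵀ, mul_eq_one_comm.1 hH, Matrix.one_mul, signDiag_mul_self]

theorem mul_signDiag_mulVec_apply (H : Matrix (Fin I) (Fin I) ℝ) (d : Fin I → Bool)
    (u : Fin I → ℝ) (i : Fin I) :
    ((H * signDiag d) *ᵥ u) i = rademacherSum d fun j => H i j * u j := by
  simp only [signDiag, mulVec, dotProduct, mul_diagonal, rademacherSum, signOfBool]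
  exact sum_congr rfl fun j _ => by ring

end SignDiag

theorem exists_orthonormal_colSpan_le_span {m n : Type*} [Fintype m] [Fintype n]
    (X : Matrix m n ℝ) :
    ∃ (k : ℕ) (b : Fin k → EuclideanSpace ℝ m), k ≤ Fintype.card n ∧ Orthonormal ℝ b ∧
      colSpan X ≤ Submodule.span ℝ (Set.range b) :=
  let b := stdOrthonormalBasis ℝ (colSpan X)
  ⟨_, _, finrank_range_le_card _, b.orthonormal.comp_linearIsometry (colSpan X).subtypeₗᵢ,
    Submodule.le_span_range_orthonormalBasis b⟩

theorem sum_sq_mul_apply_eq {I : ℕ} {H : Matrix (Fin I) (Fin I) ℝ}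
    (hHabs : ∀ i j, |H i j| = 1 / √I) {u : EuclideanSpace ℝ (Fin I)} (hu : ‖u‖ = 1) (i : Fin I) :
    ∑ j, (H i j * u j) ^ 2 = 1 / I := by
  have hH : ∀ j, H i j ^ 2 = 1 / I := fun j => by
    rw [← sq_abs, hHabs, div_pow, one_pow, sq_sqrt (Nat.cast_nonneg I)]
  simp only [mul_pow, hH, ← mul_sum, ← EuclideanSpace.real_norm_sq_eq, hu, one_pow, mul_one]

noncomputable def flatSigns {I k : ℕ} (H : Matrix (Fin I) (Fin I) ℝ)
    (b : Fin k → EuclideanSpace ℝ (Fin I)) (t : ℝ) : Finset (Fin I → Bool) :=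
  {d | ∀ q : Fin I × Fin k, |((H * signDiag d) *ᵥ ofLp (b q.2)) q.1| < t}

theorem log_two_mul_mul_div_nonneg {I R : ℕ} (hI : 0 < I) (hR : 0 < R) {η : ℝ} (hη0 : 0 < η)
    (hη1 : η ≤ 1) : 0 ≤ log (2 * I * R / η) := by
  have hI' : (1 : ℝ) ≤ I := by exact_mod_cast hI
  have hR' : (1 : ℝ) ≤ R := by exact_mod_cast hR
  refine log_nonneg ((le_div_iff₀ hη0).2 ?_)
  nlinarith

theorem le_card_flatSigns {I R k : ℕ} (hI : 0 < I) (hR : 0 < R) (hk : k ≤ R) {η : ℝ}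
    (hη0 : 0 < η) (hη1 : η ≤ 1) {H : Matrix (Fin I) (Fin I) ℝ}
    (hHabs : ∀ i j, |H i j| = 1 / √I) {b : Fin k → EuclideanSpace ℝ (Fin I)}
    (hb : Orthonormal ℝ b) :
    (1 - η) * Fintype.card (Fin I → Bool) ≤
      #(flatSigns H b √(2 * log (2 * I * R / η) / I)) := by
  set L := log (2 * I * R / η)
  have hL : 0 ≤ L := log_two_mul_mul_div_nonneg hI hR hη0 hη1
  have hexp : exp (-√(2 * L / I) ^ 2 / (2 * (1 / I))) = η / (2 * I * R) := by
    rw [sq_sqrt (by positivity), show -(2 * L / I) / (2 * (1 / I)) = -L by field_simp, exp_neg,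
      exp_log (by positivity), inv_div]
  have hcount := le_card_forall_abs_rademacherSum_lt (t := √(2 * L / I))
    (fun (q : Fin I × Fin k) j => H q.1 j * b q.2 j) (by positivity : (0 : ℝ) < 1 / I)
    (fun q => (sum_sq_mul_apply_eq hHabs (hb.1 q.2) q.1).le) (sqrt_nonneg _)
  simp only [hexp, Fintype.card_prod, Fintype.card_fin, Nat.cast_mul, ← mul_signDiag_mulVec_apply]
    at hcount
  refine le_trans ?_ hcount
  have hk' : (k : ℝ) ≤ R := by exact_mod_cast hk
  rw [Fintype.card_fun, Fintype.card_bool, Fintype.card_fin, Nat.cast_pow, Nat.cast_two]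
  gcongr
  calc (I : ℝ) * k * (2 * (η / (2 * I * R))) = k / R * η := by field_simp
    _ ≤ η := mul_le_of_le_one_left hη0.le ((div_le_one (by positivity)).2 hk')

theorem coherence_khatriRao_mul_signDiag_le {P R : ℕ} {Ip k : Fin P → ℕ} (hIp : ∀ p, 0 < Ip p)
    {H : ∀ p, Matrix (Fin (Ip p)) (Fin (Ip p)) ℝ} (hH : ∀ p, H p * (H p)ᵀ = 1)
    {X : ∀ p, Matrix (Fin (Ip p)) (Fin R) ℝ} {b : ∀ p, Fin (k p) → EuclideanSpace ℝ (Fin (Ip p))}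
    (hb : ∀ p, Orthonormal ℝ (b p)) (hXb : ∀ p, colSpan (X p) ≤ Submodule.span ℝ (Set.range (b p)))
    {c : Fin P → ℝ} (hc : ∀ p, 0 ≤ c p) {d : ∀ p, Fin (Ip p) → Bool}
    (hd : ∀ p, d p ∈ flatSigns (H p) (b p) √(c p)) :
    coherence (khatriRao fun p => H p * signDiag (d p) * X p) ≤ ∏ p, k p * c p := by
  simpa using coherence_khatriRao_le_s4 hIp
    (fun p => (hb p).comp_toLpLin (transpose_mul_self_of_mul_signDiag (hH p) (d p)))
    (fun p => colSpan_mul_le_span _ (hXb p)) fun p r i => by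
      rw [← sq_abs, ← sq_sqrt (hc p)]
      exact pow_le_pow_left₀ (abs_nonneg _) ((mem_filter.1 (hd p)).2 (i, r)).le 2

theorem one_sub_card_mul_mul_card_le_card_piFinset {P : Type*} [Fintype P] [DecidableEq P]
    {α : P → Type*} [∀ p, Fintype (α p)] [∀ p, DecidableEq (α p)] {η : ℝ} (hη : η ≤ 1)
    (G : ∀ p, Finset (α p)) (hG : ∀ p, (1 - η) * Fintype.card (α p) ≤ #(G p)) :
    (1 - Fintype.card P * η) * Fintype.card (∀ p, α p) ≤ #(Fintype.piFinset G) := by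
  have hbernoulli : 1 - Fintype.card P * η ≤ (1 - η) ^ Fintype.card P := by
    simpa [sub_eq_add_neg] using one_add_mul_le_pow (by linarith : (-2 : ℝ) ≤ -η) (Fintype.card P)
  calc (1 - Fintype.card P * η) * Fintype.card (∀ p, α p)
      ≤ (1 - η) ^ Fintype.card P * Fintype.card (∀ p, α p) := by gcongr
    _ = ∏ p, (1 - η) * Fintype.card (α p) := by
      rw [prod_mul_distrib, prod_const, card_univ, Fintype.card_pi, Nat.cast_prod]
    _ ≤ ∏ p, (#(G p) : ℝ) :=
      prod_le_prod (fun p _ => mul_nonneg (by linarith) (Nat.cast_nonneg _)) fun p _ => hG p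
    _ = #(Fintype.piFinset G) := by rw [Fintype.card_piFinset, Nat.cast_prod]

open Classical in
theorem coherence_khatriRao_randomizedHadamard_general (P R : ℕ) (hR : 0 < R)
    (Ip : Fin P → ℕ) (hIp : ∀ p, 0 < Ip p)
    (η : ℝ) (hη : η ∈ Set.Ioo (0 : ℝ) 1)
    (X : (p : Fin P) → Matrix (Fin (Ip p)) (Fin R) ℝ)
    (H : (p : Fin P) → Matrix (Fin (Ip p)) (Fin (Ip p)) ℝ)
    (hHorth : ∀ p, H p * (H p)ᵀ = 1)
    (hHabs : ∀ p i j, |H p i j| = 1 / Real.sqrt (Ip p)) :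
    (1 - P * η) * (Fintype.card ((p : Fin P) → Fin (Ip p) → Bool) : ℝ) ≤
      ((Finset.univ.filter (fun d : (p : Fin P) → Fin (Ip p) → Bool =>
          coherence (khatriRao fun p => H p * signDiag (d p) * X p) ≤
            (1 / ∏ p, (Ip p : ℝ)) *
              ∏ p, 2 * R * Real.log (2 * (Ip p) * R / η))).card : ℝ) := by
  obtain ⟨hη0, hη1⟩ := hη
  choose k b hkR hb hXb using fun p => exists_orthonormal_colSpan_le_span (X p)
  replace hkR : ∀ p, k p ≤ R := by simpa using hkR
  set c : Fin P → ℝ := fun p => 2 * log (2 * Ip p * R / η) / Ip p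
  have hc : ∀ p, 0 ≤ c p := fun p =>
    div_nonneg (mul_nonneg zero_le_two (log_two_mul_mul_div_nonneg (hIp p) hR hη0 hη1.le))
      (Nat.cast_nonneg _)
  set G := fun p => flatSigns (H p) (b p) √(c p)
  have hgood : Fintype.piFinset G ⊆ (univ.filter fun d : (p : Fin P) → Fin (Ip p) → Bool =>
      coherence (khatriRao fun p => H p * signDiag (d p) * X p) ≤
        (1 / ∏ p, (Ip p : ℝ)) * ∏ p, 2 * R * log (2 * Ip p * R / η)) := fun d hd => by
    refine mem_filter.2 ⟨mem_univ _, ?_⟩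
    calc coherence (khatriRao fun p => H p * signDiag (d p) * X p)
        ≤ ∏ p, (k p : ℝ) * c p :=
          coherence_khatriRao_mul_signDiag_le hIp hHorth hb hXb hc (Fintype.mem_piFinset.1 hd)
      _ ≤ ∏ p, (R : ℝ) * c p :=
          prod_le_prod (fun p _ => by positivity [hc p]) fun p _ =>
            mul_le_mul_of_nonneg_right (by exact_mod_cast hkR p) (hc p)
      _ = (1 / ∏ p, (Ip p : ℝ)) * ∏ p, 2 * R * log (2 * Ip p * R / η) := by
          rw [one_div_mul_eq_div, ← prod_div_distrib]
          exact prod_congr rfl fun p _ => by ring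
  calc (1 - P * η) * (Fintype.card ((p : Fin P) → Fin (Ip p) → Bool) : ℝ)
      ≤ #(Fintype.piFinset G) := by
        simpa only [Fintype.card_fin] using one_sub_card_mul_mul_card_le_card_piFinset hη1.le G
          fun p => le_card_flatSigns (hIp p) hR (hkR p) hη0 hη1.le (hHabs p) (hb p)
    _ ≤ _ := Nat.cast_le.2 (card_le_card hgood)

open Classical in
/-- Coherence bound for the Khatri–Rao product of randomized-Hadamard-transformed factors:
for at least a `(1 - Pη)`-fraction of the tuples of sign vectors `d = (d⁽¹⁾, …, d⁽ᴾ⁾)`,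
`μ(⊙_p H⁽ᵖ⁾ D⁽ᵖ⁾ X⁽ᵖ⁾) ≤ (1/Ĩ) ∏_p 2 R ln(2 I_p R / η)`. -/
theorem coherence_khatriRao_randomizedHadamard (P R : ℕ) (hP : 0 < P) (hR : 0 < R)
    (Ip : Fin P → ℕ) (hIp : ∀ p, 0 < Ip p)
    (η : ℝ) (hη : η ∈ Set.Ioo (0 : ℝ) 1)
    (X : (p : Fin P) → Matrix (Fin (Ip p)) (Fin R) ℝ)
    (H : (p : Fin P) → Matrix (Fin (Ip p)) (Fin (Ip p)) ℝ)
    (hHorth : ∀ p, H p * (H p)ᵀ = 1)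
    (hHabs : ∀ p i j, |H p i j| = 1 / Real.sqrt (Ip p)) :
    (1 - P * η) * (Fintype.card ((p : Fin P) → Fin (Ip p) → Bool) : ℝ) ≤
      ((Finset.univ.filter (fun d : (p : Fin P) → Fin (Ip p) → Bool =>
          coherence (khatriRao fun p => H p * signDiag (d p) * X p) ≤
            (1 / ∏ p, (Ip p : ℝ)) *
              ∏ p, 2 * R * Real.log (2 * (Ip p) * R / η))).card : ℝ) :=
  coherence_khatriRao_randomizedHadamard_general P R hR Ip hIp η hη X H hHorth hHabs
end
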